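/- arXiv:1901.09248 — 2 statements merged into one kernel-verified Lean document; each statement's English description precedes it below -/
import Mathlib

section
/- In the Modified Specialized GRS Code protocol setting: let S ⊆ {1,…,K} with |S| = M ≥ 2, W ∈ S, c_i ∈ F_q^× for i ∈ S, p(x) = ∏_{i∉S}(x−ω_i) (of degree K−M), v_i = c_i/p(ω_i) for i ∈ S∖{W}, v_W = c/p(ω_W) for some c ∈ F_q^×∖{c_W}, and v_i ∈ F_q^× arbitrary for i ∉ S. Then the codeword (v_j p(ω_j))_{j=1}^K of the (K, K−M+1) GRS code generated by G_{i,j}=v_j ω_j^{i−1} (1 ≤ i ≤ K−M+1) has support exactly S, equals c_i at coordinate i for all i ∈ S∖{W}, and equals c ≠ c_W at coordinate W. -/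
open Polynomial Finset

theorem stmt12 (F : Type) [Field F] [Fintype F] (K M : ℕ)
    (hM2 : 2 ≤ M) (hMK : M ≤ K) (hq : K ≤ Fintype.card F) (hq3 : 3 ≤ Fintype.card F)
    (ω : Fin K → F) (hω : Function.Injective ω)
    (S : Finset (Fin K)) (hS : S.card = M) (W : Fin K) (hW : W ∈ S)
    (cf : Fin K → F) (hcf : ∀ i ∈ S, cf i ≠ 0)
    (c : F) (hc0 : c ≠ 0) (hccW : c ≠ cf W)
    (v : Fin K → F)
    (hv1 : ∀ i ∈ S, i ≠ W →
      v i = cf i / (∏ t ∈ Finset.univ \ S, (X - C (ω t))).eval (ω i))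
    (hvW : v W = c / (∏ t ∈ Finset.univ \ S, (X - C (ω t))).eval (ω W))
    (hv2 : ∀ i ∉ S, v i ≠ 0) :
    (∀ j, v j * (∏ t ∈ Finset.univ \ S, (X - C (ω t))).eval (ω j) ≠ 0 ↔ j ∈ S) ∧
    (∀ i ∈ S, i ≠ W → v i * (∏ t ∈ Finset.univ \ S, (X - C (ω t))).eval (ω i) = cf i) ∧
    v W * (∏ t ∈ Finset.univ \ S, (X - C (ω t))).eval (ω W) = c := by
  have heval : ∀ j : Fin K, (∏ t ∈ Finset.univ \ S, (X - C (ω t))).eval (ω j)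
      = ∏ t ∈ Finset.univ \ S, (ω j - ω t) := by
    intro j; simp [eval_prod]
  have hne : ∀ j ∈ S, (∏ t ∈ Finset.univ \ S, (X - C (ω t))).eval (ω j) ≠ 0 := by
    intro j hj
    rw [heval]
    apply Finset.prod_ne_zero_iff.2
    intro t ht
    have : t ≠ j := fun h => (Finset.mem_sdiff.1 ht).2 (h ▸ hj)
    exact sub_ne_zero.2 fun h => this (hω h.symm)
  refine ⟨?_, ?_, ?_⟩
  · intro j
    constructor
    · intro h
      by_contra hj
      apply h
      rw [heval]
      exact mul_eq_zero_of_right _ (Finset.prod_eq_zero (f := fun t => ω j - ω t) (Finset.mem_sdiff.2 ⟨Finset.mem_univ j, hj⟩) (sub_self (ω j)))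
    · intro hj
      apply mul_ne_zero _ (hne j hj)
      by_cases hjW : j = W
      · subst hjW; rw [hvW]; exact div_ne_zero hc0 (hne j hj)
      · rw [hv1 j hj hjW]; exact div_ne_zero (hcf j hj) (hne j hj)
  · intro i hi hiW
    rw [hv1 i hi hiW, div_mul_cancel₀ _ (hne i hi)]
  · rw [hvW, div_mul_cancel₀ _ (hne W hW)]
end

section
/- For integers K ≥ 2 and 2 ≤ M ≤ K, if a scalar-linear answer A (a tuple of F_q-linear combinations of X₁,…,X_K) together with query Q satisfies, for every j in an index set J of size K−M+1−n, H(Z_j | A, Q, X_{n+1}) = 0 for linear functionals Z_j that are linearly independent of each other and of X₁,…,X_{n+1}, and additionally H(X_i | A, Q) = 0 for i = 1,…,n, then H(A) ≥ (K−M+1)·m·log₂ q. -/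
open Finset

open Classical in
/-- Probability mass function of a random variable `X` on a finite space with weights `μ`. -/
noncomputable def pm {Ω α : Type*} [Fintype Ω] (μ : Ω → ℝ) (X : Ω → α) (a : α) : ℝ :=
  ∑ ω ∈ Finset.univ.filter (fun ω => X ω = a), μ ω

/-- Shannon entropy (in bits) of a random variable `X`. -/
noncomputable def ent {Ω α : Type*} [Fintype Ω] [Fintype α] (μ : Ω → ℝ) (X : Ω → α) : ℝ :=
  -∑ a : α, pm μ X a * Real.logb 2 (pm μ X a)

/-- Conditional Shannon entropy `H(X | Y)` in bits. -/
noncomputable def condEnt {Ω α β : Type*} [Fintype Ω] [Fintype α] [Fintype β]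
    (μ : Ω → ℝ) (X : Ω → α) (Y : Ω → β) : ℝ :=
  ent μ (fun ω => (X ω, Y ω)) - ent μ Y

/-!
Write `C = (A, Q, X_{n+1})` and `L = log₂ |E|`. By hypothesis `C` determines, on the support of
`μ`, the query `Q` and the `r + n + 1` linearly independent functionals `Z_j` and
`X_1, …, X_{n+1}` of the messages. As the messages are uniform and independent of `Q`, these
functionals are uniform and independent of `Q` as well, so `H(Q) + (r + n + 1) L ≤ H(C)`.
Subadditivity gives `H(C) ≤ H(A) + H(Q, X_{n+1}) = H(A) + H(Q) + L`, whence `(r + n) L ≤ H(A)`.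
-/

section Pm

variable {Ω α β : Type*} [Fintype Ω] {μ : Ω → ℝ}

lemma pm_nonneg (hμ0 : ∀ ω, 0 ≤ μ ω) (X : Ω → α) (a : α) : 0 ≤ pm μ X a :=
  Finset.sum_nonneg fun ω _ => hμ0 ω

lemma sum_pm [Fintype α] (X : Ω → α) : ∑ a, pm μ X a = ∑ ω, μ ω := by
  classical
  exact Finset.sum_fiberwise _ X μ

lemma le_pm_apply (hμ0 : ∀ ω, 0 ≤ μ ω) (X : Ω → α) (ω : Ω) : μ ω ≤ pm μ X (X ω) :=
  Finset.single_le_sum (fun ω _ => hμ0 ω) (by simp)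

open Classical in
lemma pm_comp [Fintype α] (X : Ω → α) (g : α → β) (b : β) :
    pm μ (fun ω => g (X ω)) b = ∑ a with g a = b, pm μ X a := by
  unfold pm
  rw [Finset.sum_comm' (t' := univ.filter fun ω => g (X ω) = b) (s' := fun ω => {X ω})]
  · simp
  · aesop

lemma pm_le_pm_comp (hμ0 : ∀ ω, 0 ≤ μ ω) [Fintype α] (X : Ω → α) (g : α → β) (a : α) :
    pm μ X a ≤ pm μ (fun ω => g (X ω)) (g a) := by
  classical
  rw [pm_comp X g]
  exact Finset.single_le_sum (fun a _ => pm_nonneg hμ0 X a)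
    (Finset.mem_filter.mpr ⟨Finset.mem_univ a, rfl⟩)

lemma pm_fst [Fintype α] [Fintype β] (X : Ω → α) (Y : Ω → β) (x : α) :
    pm μ X x = ∑ y, pm μ (fun ω => (X ω, Y ω)) (x, y) := by
  classical
  rw [show pm μ X x = pm μ (fun ω => (X ω, Y ω).1) x from rfl,
    pm_comp (fun ω => (X ω, Y ω)) Prod.fst, Finset.sum_filter, Fintype.sum_prod_type,
    Finset.sum_eq_single x (fun x' _ hx' => by simp [hx']) (by simp)]
  simp

lemma pm_snd [Fintype α] [Fintype β] (X : Ω → α) (Y : Ω → β) (y : β) :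
    pm μ Y y = ∑ x, pm μ (fun ω => (X ω, Y ω)) (x, y) := by
  classical
  rw [show pm μ Y y = pm μ (fun ω => (X ω, Y ω).2) y from rfl,
    pm_comp (fun ω => (X ω, Y ω)) Prod.snd, Finset.sum_filter, Fintype.sum_prod_type_right,
    Finset.sum_eq_single y (fun y' _ hy' => by simp [hy']) (by simp)]
  simp

lemma pm_congr {X X' : Ω → α} (h : ∀ ω, μ ω ≠ 0 → X ω = X' ω) : pm μ X = pm μ X' := by
  classical
  funext a
  unfold pm
  refine Finset.sum_congr_of_eq_on_inter ?_ ?_ fun _ _ _ => rfl <;>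
  · intro ω h1 h2
    by_contra hω
    simp_all

end Pm

open Real in
lemma mul_logb_le_mul_logb_add {p q : ℝ} (hp : 0 ≤ p) (hq : 0 ≤ q) (hpq : 0 < p → 0 < q) :
    p * logb 2 q ≤ p * logb 2 p + (q - p) / log 2 := by
  rcases hp.eq_or_lt with rfl | hp
  · simp only [zero_mul, zero_add, sub_zero]
    positivity
  have hq := hpq hp
  have key : p * log (q / p) ≤ q - p := by
    calc p * log (q / p) ≤ p * (q / p - 1) :=
          mul_le_mul_of_nonneg_left (log_le_sub_one_of_pos (by positivity)) hp.le
      _ = q - p := by field_simp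
  rw [log_div hq.ne' hp.ne'] at key
  have split : p * logb 2 q = p * logb 2 p + p * (log q - log p) / log 2 := by
    simp only [logb]; ring
  rw [split]
  gcongr

open Real in
lemma sum_mul_logb_le_sum_mul_logb {ι : Type*} [Fintype ι] {p q : ι → ℝ}
    (hp : ∀ i, 0 ≤ p i) (hq : ∀ i, 0 ≤ q i) (hpq : ∀ i, 0 < p i → 0 < q i)
    (hsum : ∑ i, q i ≤ ∑ i, p i) :
    ∑ i, p i * logb 2 (q i) ≤ ∑ i, p i * logb 2 (p i) := by
  have hlog2 : 0 < log 2 := log_pos one_lt_two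
  calc ∑ i, p i * logb 2 (q i) ≤ ∑ i, (p i * logb 2 (p i) + (q i - p i) / log 2) :=
        Finset.sum_le_sum fun i _ => mul_logb_le_mul_logb_add (hp i) (hq i) (hpq i)
    _ = ∑ i, p i * logb 2 (p i) + (∑ i, q i - ∑ i, p i) / log 2 := by
        rw [Finset.sum_add_distrib, ← Finset.sum_div, Finset.sum_sub_distrib]
    _ ≤ ∑ i, p i * logb 2 (p i) := by
        have : (∑ i, q i - ∑ i, p i) / log 2 ≤ 0 :=
          div_nonpos_of_nonpos_of_nonneg (by linarith) hlog2.le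
        linarith

section Ent

open Real

variable {Ω α β : Type*} [Fintype Ω] {μ : Ω → ℝ} [Fintype α] [Fintype β]

lemma ent_comp_le (hμ0 : ∀ ω, 0 ≤ μ ω) (X : Ω → α) (g : α → β) :
    ent μ (fun ω => g (X ω)) ≤ ent μ X := by
  classical
  rw [ent, ent, neg_le_neg_iff]
  calc ∑ a, pm μ X a * logb 2 (pm μ X a)
      ≤ ∑ a, pm μ X a * logb 2 (pm μ (fun ω => g (X ω)) (g a)) := by
        refine Finset.sum_le_sum fun a _ => ?_
        rcases (pm_nonneg hμ0 X a).eq_or_lt with h | h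
        · simp [← h]
        · exact mul_le_mul_of_nonneg_left
            (logb_le_logb_of_le one_lt_two h (pm_le_pm_comp hμ0 X g a)) h.le
    _ = ∑ b, ∑ a with g a = b, pm μ X a * logb 2 (pm μ (fun ω => g (X ω)) (g a)) :=
        (Finset.sum_fiberwise _ g _).symm
    _ = ∑ b, pm μ (fun ω => g (X ω)) b * logb 2 (pm μ (fun ω => g (X ω)) b) := by
        refine Finset.sum_congr rfl fun b _ => ?_
        have hb : ∀ a ∈ univ.filter (g · = b),
            pm μ X a * logb 2 (pm μ (fun ω => g (X ω)) (g a)) =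
              pm μ X a * logb 2 (pm μ (fun ω => g (X ω)) b) :=
          fun a ha => by rw [(Finset.mem_filter.1 ha).2]
        rw [Finset.sum_congr rfl hb, ← Finset.sum_mul, ← pm_comp X g]

lemma ent_pair_le (hμ0 : ∀ ω, 0 ≤ μ ω) (hμ1 : ∑ ω, μ ω = 1) (X : Ω → α) (Y : Ω → β) :
    ent μ (fun ω => (X ω, Y ω)) ≤ ent μ X + ent μ Y := by
  have hX : ∑ p : α × β, pm μ (fun ω => (X ω, Y ω)) p * logb 2 (pm μ X p.1) = -ent μ X := by
    rw [ent, neg_neg, Fintype.sum_prod_type]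
    exact Finset.sum_congr rfl fun x _ => by dsimp only; rw [← Finset.sum_mul, ← pm_fst]
  have hY : ∑ p : α × β, pm μ (fun ω => (X ω, Y ω)) p * logb 2 (pm μ Y p.2) = -ent μ Y := by
    rw [ent, neg_neg, Fintype.sum_prod_type_right]
    exact Finset.sum_congr rfl fun y _ => by dsimp only; rw [← Finset.sum_mul, ← pm_snd]
  have hpos : ∀ p, 0 < pm μ (fun ω => (X ω, Y ω)) p → 0 < pm μ X p.1 ∧ 0 < pm μ Y p.2 :=
    fun p hp => ⟨hp.trans_le (pm_le_pm_comp hμ0 _ Prod.fst p),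
      hp.trans_le (pm_le_pm_comp hμ0 _ Prod.snd p)⟩
  have hsplit : ∀ p : α × β, pm μ (fun ω => (X ω, Y ω)) p * logb 2 (pm μ X p.1 * pm μ Y p.2) =
      pm μ (fun ω => (X ω, Y ω)) p * logb 2 (pm μ X p.1) +
        pm μ (fun ω => (X ω, Y ω)) p * logb 2 (pm μ Y p.2) := by
    intro p
    rcases (pm_nonneg hμ0 (fun ω => (X ω, Y ω)) p).eq_or_lt with h | h
    · simp [← h]
    · rw [logb_mul (hpos p h).1.ne' (hpos p h).2.ne', mul_add]
  have gibbs := sum_mul_logb_le_sum_mul_logb (p := pm μ (fun ω => (X ω, Y ω)))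
    (q := fun p : α × β => pm μ X p.1 * pm μ Y p.2)
    (pm_nonneg hμ0 _) (fun p => mul_nonneg (pm_nonneg hμ0 X _) (pm_nonneg hμ0 Y _))
    (fun p hp => mul_pos (hpos p hp).1 (hpos p hp).2)
    (by rw [Fintype.sum_prod_type, ← Finset.sum_mul_sum, sum_pm, sum_pm, sum_pm, hμ1, one_mul])
  simp only [hsplit, Finset.sum_add_distrib, hX, hY] at gibbs
  rw [ent]
  linarith

end Ent

def Determines {Ω α β : Type*} (μ : Ω → ℝ) (Y : Ω → β) (X : Ω → α) : Prop :=
  ∀ ω ω', μ ω ≠ 0 → μ ω' ≠ 0 → Y ω = Y ω' → X ω = X ω'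

section CondEnt

open Real

variable {Ω α β : Type*} [Fintype Ω] {μ : Ω → ℝ} [Fintype α] [Fintype β]

lemma condEnt_eq_sum (X : Ω → α) (Y : Ω → β) :
    condEnt μ X Y = ∑ p : α × β, pm μ (fun ω => (X ω, Y ω)) p *
      (logb 2 (pm μ Y p.2) - logb 2 (pm μ (fun ω => (X ω, Y ω)) p)) := by
  have hY : ∑ y, pm μ Y y * logb 2 (pm μ Y y) =
      ∑ p : α × β, pm μ (fun ω => (X ω, Y ω)) p * logb 2 (pm μ Y p.2) := by
    rw [Fintype.sum_prod_type_right]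
    exact Finset.sum_congr rfl fun y _ => by dsimp only; rw [← Finset.sum_mul, ← pm_snd]
  simp only [condEnt, ent, mul_sub, Finset.sum_sub_distrib, hY]
  ring

lemma pm_pair_eq_pm_snd_of_condEnt_eq_zero (hμ0 : ∀ ω, 0 ≤ μ ω) {X : Ω → α} {Y : Ω → β}
    (h : condEnt μ X Y = 0) {p : α × β} (hp : 0 < pm μ (fun ω => (X ω, Y ω)) p) :
    pm μ (fun ω => (X ω, Y ω)) p = pm μ Y p.2 := by
  have hle : pm μ (fun ω => (X ω, Y ω)) p ≤ pm μ Y p.2 := pm_le_pm_comp hμ0 _ Prod.snd p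
  have hterm_nonneg : ∀ p : α × β, 0 ≤ pm μ (fun ω => (X ω, Y ω)) p *
      (logb 2 (pm μ Y p.2) - logb 2 (pm μ (fun ω => (X ω, Y ω)) p)) := by
    intro p
    rcases (pm_nonneg hμ0 (fun ω => (X ω, Y ω)) p).eq_or_lt with h0 | h0
    · simp [← h0]
    · exact mul_nonneg h0.le (sub_nonneg.mpr (logb_le_logb_of_le one_lt_two h0
        (pm_le_pm_comp hμ0 _ Prod.snd p)))
  rw [condEnt_eq_sum, Finset.sum_eq_zero_iff_of_nonneg fun p _ => hterm_nonneg p] at h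
  have hlog := (mul_eq_zero.mp (h p (Finset.mem_univ p))).resolve_left hp.ne'
  exact logb_injOn_pos one_lt_two hp (hp.trans_le hle) (sub_eq_zero.mp hlog).symm

lemma determines_of_condEnt_eq_zero (hμ0 : ∀ ω, 0 ≤ μ ω) {X : Ω → α} {Y : Ω → β}
    (h : condEnt μ X Y = 0) : Determines μ Y X := by
  intro ω ω' hω hω' hY
  by_contra hne
  have hpos : ∀ ω₀, μ ω₀ ≠ 0 → 0 < pm μ (fun ω => (X ω, Y ω)) (X ω₀, Y ω₀) := fun ω₀ h₀ =>
    (lt_of_le_of_ne (hμ0 ω₀) (Ne.symm h₀)).trans_le (le_pm_apply hμ0 _ ω₀)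
  have hsum := Finset.add_le_sum (f := fun x => pm μ (fun ω => (X ω, Y ω)) (x, Y ω))
    (fun x _ => pm_nonneg hμ0 _ _) (Finset.mem_univ (X ω)) (Finset.mem_univ (X ω')) hne
  have h1 := pm_pair_eq_pm_snd_of_condEnt_eq_zero hμ0 h (hpos ω hω)
  have h2 := pm_pair_eq_pm_snd_of_condEnt_eq_zero hμ0 h (hpos ω' hω')
  simp only [← hY, ← pm_snd] at hsum h1 h2
  linarith [hpos ω hω]

end CondEnt

namespace Determines

variable {Ω α β γ ι : Type*} {μ : Ω → ℝ} {Y : Ω → β}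

lemma refl : Determines μ Y Y := fun _ _ _ _ h => h

lemma comp {X : Ω → α} (h : Determines μ Y X) (g : α → γ) : Determines μ Y (fun ω => g (X ω)) :=
  fun ω ω' hω hω' hY => congrArg g (h ω ω' hω hω' hY)

lemma of_comp {X : Ω → α} {g : β → γ} (h : Determines μ (fun ω => g (Y ω)) X) :
    Determines μ Y X :=
  fun ω ω' hω hω' hY => h ω ω' hω hω' (congrArg g hY)

lemma pi {X : Ω → ι → α} (h : ∀ i, Determines μ Y (fun ω => X ω i)) : Determines μ Y X :=
  fun ω ω' hω hω' hY => funext fun i => h i ω ω' hω hω' hY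

lemma prod {X₁ : Ω → α} {X₂ : Ω → γ} (h₁ : Determines μ Y X₁) (h₂ : Determines μ Y X₂) :
    Determines μ Y (fun ω => (X₁ ω, X₂ ω)) :=
  fun ω ω' hω hω' hY => Prod.ext (h₁ ω ω' hω hω' hY) (h₂ ω ω' hω hω' hY)

lemma ent_le [Fintype Ω] [Fintype α] [Fintype β] (hμ0 : ∀ ω, 0 ≤ μ ω) {X : Ω → α}
    (h : Determines μ Y X) : ent μ X ≤ ent μ Y := by
  classical
  rcases isEmpty_or_nonempty α with hα | hα
  · have : IsEmpty Ω := X.isEmpty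
    simp [ent, pm]
  let f : β → α := fun y =>
    if hy : ∃ ω, μ ω ≠ 0 ∧ Y ω = y then X hy.choose else Classical.arbitrary α
  have hf : ∀ ω, μ ω ≠ 0 → X ω = f (Y ω) := fun ω hω => by
    have hy : ∃ ω', μ ω' ≠ 0 ∧ Y ω' = Y ω := ⟨ω, hω, rfl⟩
    simp only [f, dif_pos hy]
    exact h ω _ hω hy.choose_spec.1 hy.choose_spec.2.symm
  calc ent μ X = ent μ (fun ω => f (Y ω)) := by rw [ent, ent, pm_congr hf]
    _ ≤ ent μ Y := ent_comp_le hμ0 Y f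

end Determines

theorem AddMonoidHom.card_fiber_mul_card_of_surjective {G H : Type*} [AddGroup G] [AddGroup H]
    [Fintype G] [Fintype H] [DecidableEq H] (f : G →+ H) (hf : Function.Surjective f) (h : H) :
    #{x | f x = h} * Fintype.card H = Fintype.card G := by
  have hfiber : ∀ h', #{x | f x = h'} = #{x | f x = h} := by
    intro h'
    obtain ⟨a, rfl⟩ := hf h
    obtain ⟨b, rfl⟩ := hf h'
    refine Finset.card_nbij' (· + (-b + a)) (· + (-a + b)) ?_ ?_ ?_ ?_ <;>
      simp +contextual [Set.MapsTo, Set.LeftInvOn, Set.RightInvOn, add_assoc]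
  calc #{x | f x = h} * Fintype.card H = ∑ h', #{x | f x = h'} := by
        simp [hfiber, mul_comm]
    _ = Fintype.card G := (Finset.card_eq_sum_card_fiberwise fun x _ => Finset.mem_univ (f x)).symm

section Uniform

open Real

variable {Ω β G H : Type*} [Fintype Ω] {μ : Ω → ℝ} [Fintype β] [Fintype G] [Fintype H]

lemma pm_prod_map_of_uniform [AddGroup G] [AddGroup H] (f : G →+ H) (hf : Function.Surjective f)
    (Q : Ω → β) (X : Ω → G)
    (hQX : ∀ b x, pm μ (fun ω => (Q ω, X ω)) (b, x) = pm μ Q b / Fintype.card G) (b : β) (h : H) :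
    pm μ (fun ω => (Q ω, f (X ω))) (b, h) = pm μ Q b / Fintype.card H := by
  classical
  have hcard := f.card_fiber_mul_card_of_surjective hf h
  have hH : (Fintype.card H : ℝ) ≠ 0 := by exact_mod_cast Fintype.card_ne_zero
  obtain ⟨x, hx⟩ := hf h
  have hfiber : (#{x | f x = h} : ℝ) ≠ 0 := by
    exact_mod_cast (Finset.card_pos.mpr ⟨x, by simp [hx]⟩).ne'
  rw [show (fun ω => (Q ω, f (X ω))) = fun ω => Prod.map id f (Q ω, X ω) from rfl, pm_comp,
    Finset.sum_filter, Fintype.sum_prod_type,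
    Finset.sum_eq_single b (by simp +contextual) (by simp)]
  simp only [Prod.map, id, Prod.mk.injEq, true_and, hQX]
  rw [← Finset.sum_filter, Finset.sum_const, nsmul_eq_mul, ← hcard]
  push_cast
  field_simp

lemma ent_prod_eq_of_uniform [Nonempty H] (hμ1 : ∑ ω, μ ω = 1) (Q : Ω → β) (V : Ω → H)
    (h : ∀ b v, pm μ (fun ω => (Q ω, V ω)) (b, v) = pm μ Q b / Fintype.card H) :
    ent μ (fun ω => (Q ω, V ω)) = ent μ Q + logb 2 (Fintype.card H) := by
  have hH : (0 : ℝ) < Fintype.card H := by exact_mod_cast Fintype.card_pos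
  have hb : ∀ b, ∑ v : H, pm μ (fun ω => (Q ω, V ω)) (b, v) *
      logb 2 (pm μ (fun ω => (Q ω, V ω)) (b, v)) =
      pm μ Q b * logb 2 (pm μ Q b) - pm μ Q b * logb 2 (Fintype.card H) := by
    intro b
    simp only [h, Finset.sum_const, Finset.card_univ, nsmul_eq_mul]
    rcases eq_or_ne (pm μ Q b) 0 with h0 | h0
    · simp [h0]
    · rw [logb_div h0 hH.ne']
      field_simp
  rw [ent, Fintype.sum_prod_type]
  simp only [hb, Finset.sum_sub_distrib, ← Finset.sum_mul, sum_pm, hμ1, one_mul, ent]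
  ring

lemma ent_prod_map_of_uniform [AddGroup G] [AddGroup H] [Nonempty H] (hμ1 : ∑ ω, μ ω = 1)
    (f : G →+ H) (hf : Function.Surjective f) (Q : Ω → β) (X : Ω → G)
    (hQX : ∀ b x, pm μ (fun ω => (Q ω, X ω)) (b, x) = pm μ Q b / Fintype.card G) :
    ent μ (fun ω => (Q ω, f (X ω))) = ent μ Q + logb 2 (Fintype.card H) :=
  ent_prod_eq_of_uniform hμ1 Q _ (pm_prod_map_of_uniform f hf Q X hQX)

end Uniform

theorem Matrix.mulVec_surjective_of_linearIndependent_rows {K m n : Type*} [Field K]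
    [Fintype m] [Fintype n] {A : Matrix m n K} (h : LinearIndependent K A.row) :
    Function.Surjective A.mulVec := by
  have hrank : A.rank = Fintype.card m := by
    rw [Matrix.rank_eq_finrank_span_row, finrank_span_eq_card h]
  have : LinearMap.range A.mulVecLin = ⊤ :=
    Submodule.eq_top_of_finrank_eq <| by
      rw [← Matrix.rank, hrank, Module.finrank_fintype_fun_eq_card]
  exact LinearMap.range_eq_top.mp this

section EvalRows

variable {F E ι κ : Type*} [Field F] [CommRing E] [Algebra F E] [Fintype κ]

def evalRows (c : ι → κ → F) : (κ → E) →+ (ι → E) :=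
  AddMonoidHom.mk' (fun x j => ∑ i, c j i • x i) fun x y => by
    ext j; simp [smul_add, Finset.sum_add_distrib]

lemma evalRows_apply (c : ι → κ → F) (x : κ → E) (j : ι) :
    evalRows c x j = ∑ i, c j i • x i := rfl

lemma evalRows_surjective [Fintype ι] {c : ι → κ → F} (hc : LinearIndependent F c) :
    Function.Surjective (evalRows (E := E) c) := by
  classical
  obtain ⟨D, hD⟩ := Matrix.mulVec_surjective_iff_exists_right_inverse.mp
    (Matrix.mulVec_surjective_of_linearIndependent_rows (A := Matrix.of c) hc)
  have hsurj := Matrix.mulVec_surjective_iff_exists_right_inverse.mpr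
    ⟨D.map (algebraMap F E), by
      rw [← Matrix.map_mul, hD, Matrix.map_one _ (map_zero _) (map_one _)]⟩
  convert hsurj using 1
  ext x j
  simp [evalRows_apply, Matrix.mulVec, dotProduct, Algebra.smul_def]

end EvalRows

lemma determines_evalRows_of_condEnt_eq_zero {Ω E F β γ : Type*} [Fintype Ω] [Field F]
    [Fintype E] [CommRing E] [Algebra F E] [Fintype β] [Fintype γ] {μ : Ω → ℝ}
    (hμ0 : ∀ ω, 0 ≤ μ ω) {K n r : ℕ} (hn : n + 1 ≤ K) (Xs : Ω → Fin K → E) (A : Ω → γ)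
    (Q : Ω → β) (z : Fin r → Fin K → F)
    (hZ : ∀ j, condEnt μ (fun ω => ∑ i, z j i • Xs ω i) (fun ω => (A ω, Q ω, Xs ω ⟨n, hn⟩)) = 0)
    (hX : ∀ i : Fin n,
      condEnt μ (fun ω => Xs ω (Fin.castLE (Nat.le_of_succ_le hn) i)) (fun ω => (A ω, Q ω)) = 0) :
    Determines μ (fun ω => (A ω, Q ω, Xs ω ⟨n, hn⟩)) (fun ω =>
      evalRows (Sum.elim z fun i : Fin (n + 1) => Pi.single (Fin.castLE hn i) (1 : F)) (Xs ω)) := by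
  classical
  refine Determines.pi fun j => ?_
  rcases j with j | i
  · exact determines_of_condEnt_eq_zero hμ0 (hZ j)
  · simp only [evalRows_apply, Sum.elim_inr, Pi.single_apply, ite_smul, one_smul, zero_smul,
      Finset.sum_ite_eq', Finset.mem_univ, if_true]
    induction i using Fin.lastCases with
    | last => exact Determines.refl.comp fun c : γ × β × E => c.2.2
    | cast i =>
      exact (determines_of_condEnt_eq_zero hμ0 (hX i)).of_comp (g := fun c => (c.1, c.2.1))

lemma logb_card_eq_finrank_mul_logb_card (F E : Type*) [Field F] [Fintype F] [Ring E]
    [Fintype E] [Module F E] :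
    Real.logb 2 (Fintype.card E) = Module.finrank F E * Real.logb 2 (Fintype.card F) := by
  rw [Module.card_eq_pow_finrank (K := F), Nat.cast_pow, Real.logb_pow]

theorem stmt16_general (F E : Type) [Field F] [Fintype F] [Field E] [Fintype E] [Algebra F E]
    (Ω : Type) [Fintype Ω] (μ : Ω → ℝ)
    (hμ0 : ∀ ω, 0 ≤ μ ω) (hμ1 : ∑ ω, μ ω = 1)
    (K M n r t : ℕ) (hMK : M ≤ K)
    (hn : n + 1 ≤ K) (hr : r + n = K - M + 1)
    (Xs : Ω → Fin K → E)
    (hXs : ∀ x : Fin K → E, pm μ Xs x = ((Fintype.card E : ℝ) ^ K)⁻¹)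
    (β : Type) [Fintype β] (Q : Ω → β)
    (hQX : ∀ (b : β) (x : Fin K → E),
      pm μ (fun ω => (Q ω, Xs ω)) (b, x) = pm μ Q b * pm μ Xs x)
    (a : Fin t → Fin K → F)
    (z : Fin r → Fin K → F)
    (hli : LinearIndependent F
      (Sum.elim z (fun i : Fin (n + 1) => Pi.single (Fin.castLE hn i) (1 : F)) :
        Fin r ⊕ Fin (n + 1) → Fin K → F))
    (hZ : ∀ j : Fin r,
      condEnt μ (fun ω => ∑ i, z j i • Xs ω i)
        (fun ω => ((fun s : Fin t => ∑ i, a s i • Xs ω i), Q ω, Xs ω ⟨n, hn⟩)) = 0)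
    (hX : ∀ i : Fin n,
      condEnt μ (fun ω => Xs ω (Fin.castLE (Nat.le_of_succ_le hn) i))
        (fun ω => ((fun s : Fin t => ∑ i, a s i • Xs ω i), Q ω)) = 0) :
    ((K : ℝ) - (M : ℝ) + 1) * ((Module.finrank F E : ℝ) * Real.logb 2 (Fintype.card F)) ≤
      ent μ (fun ω (s : Fin t) => ∑ i, a s i • Xs ω i) := by
  have hQX' : ∀ b x, pm μ (fun ω => (Q ω, Xs ω)) (b, x) =
      pm μ Q b / Fintype.card (Fin K → E) := fun b x => by
    rw [hQX, hXs, Fintype.card_fun, Fintype.card_fin, div_eq_mul_inv, Nat.cast_pow]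
  have hcoded := ent_prod_map_of_uniform hμ1 _ (evalRows_surjective hli) Q Xs hQX'
  have hside := ent_prod_map_of_uniform hμ1 (Pi.evalAddMonoidHom (fun _ => E) ⟨n, hn⟩)
    (fun e => ⟨fun _ => e, rfl⟩) Q Xs hQX'
  have hdet := ((Determines.refl.comp fun c : (Fin t → E) × β × E => c.2.1).prod
    (determines_evalRows_of_condEnt_eq_zero hμ0 hn Xs _ Q z hZ hX)).ent_le hμ0
  have hsub := ent_pair_le hμ0 hμ1 (fun ω (s : Fin t) => ∑ i, a s i • Xs ω i)
    (fun ω => (Q ω, Xs ω ⟨n, hn⟩))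
  have hrn : (r : ℝ) + n = K - M + 1 := by
    rw [← Nat.cast_add, hr, Nat.cast_add, Nat.cast_sub hMK, Nat.cast_one]
  simp only [Pi.evalAddMonoidHom_apply, Fintype.card_fun, Fintype.card_sum, Fintype.card_fin,
    Nat.cast_pow, Real.logb_pow] at hcoded hside
  rw [← logb_card_eq_finrank_mul_logb_card F E, ← hrn]
  push_cast at hcoded
  linarith

theorem stmt16 (F E : Type) [Field F] [Fintype F] [Field E] [Fintype E] [Algebra F E]
    (Ω : Type) [Fintype Ω] (μ : Ω → ℝ)
    (hμ0 : ∀ ω, 0 ≤ μ ω) (hμ1 : ∑ ω, μ ω = 1)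
    (K M n r t : ℕ) (hK : 2 ≤ K) (hM2 : 2 ≤ M) (hMK : M ≤ K)
    (hn : n + 1 ≤ K) (hr : r + n = K - M + 1)
    (Xs : Ω → Fin K → E)
    (hXs : ∀ x : Fin K → E, pm μ Xs x = ((Fintype.card E : ℝ) ^ K)⁻¹)
    (β : Type) [Fintype β] (Q : Ω → β)
    (hQX : ∀ (b : β) (x : Fin K → E),
      pm μ (fun ω => (Q ω, Xs ω)) (b, x) = pm μ Q b * pm μ Xs x)
    (a : Fin t → Fin K → F)
    (z : Fin r → Fin K → F)
    (hli : LinearIndependent F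
      (Sum.elim z (fun i : Fin (n + 1) => Pi.single (Fin.castLE hn i) (1 : F)) :
        Fin r ⊕ Fin (n + 1) → Fin K → F))
    (hZ : ∀ j : Fin r,
      condEnt μ (fun ω => ∑ i, z j i • Xs ω i)
        (fun ω => ((fun s : Fin t => ∑ i, a s i • Xs ω i), Q ω, Xs ω ⟨n, hn⟩)) = 0)
    (hX : ∀ i : Fin n,
      condEnt μ (fun ω => Xs ω (Fin.castLE (Nat.le_of_succ_le hn) i))
        (fun ω => ((fun s : Fin t => ∑ i, a s i • Xs ω i), Q ω)) = 0) :
    ((K : ℝ) - (M : ℝ) + 1) * ((Module.finrank F E : ℝ) * Real.logb 2 (Fintype.card F)) ≤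
      ent μ (fun ω (s : Fin t) => ∑ i, a s i • Xs ω i) :=
  stmt16_general F E Ω μ hμ0 hμ1 K M n r t hMK hn hr Xs hXs β Q hQX a z hli hZ hX
end
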